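/- arXiv:2508.14671 — 4 statements merged into one kernel-verified Lean document; each statement's English description precedes it below -/
import Mathlib

section
/- Let ≺ be a strict partial order on a set V, let z ∉ V, and let S₁, S₂ ⊆ V. Let ≺' be the transitive closure of the relation ≺ ∪ (S₁ × {z}) ∪ ({z} × S₂) on V ∪ {z}. Then ≺' is a strict partial order (i.e. irreflexive and transitive) if and only if for all v ∈ S₁ and all w ∈ S₂, neither w ≺ v nor v = w holds. -/
/-- Extending a strict partial order `prec` on a set `V` by a fresh element `z`
that succeeds all of `S₁` and precedes all of `S₂`: the transitive closure of
`prec ∪ (S₁ × {z}) ∪ ({z} × S₂)` is a strict partial order if and only if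
no element of `S₂` equals or precedes any element of `S₁`. -/
theorem order_extension_iff {α : Type*} (V : Set α) (z : α) (hz : z ∉ V)
    (prec : α → α → Prop)
    (hdom : ∀ a b, prec a b → a ∈ V ∧ b ∈ V)
    (hirr : Irreflexive prec) (htrans : Transitive prec)
    (S₁ S₂ : Set α) (hS₁ : S₁ ⊆ V) (hS₂ : S₂ ⊆ V) :
    (Irreflexive (Relation.TransGen
        (fun a b => prec a b ∨ (a ∈ S₁ ∧ b = z) ∨ (a = z ∧ b ∈ S₂))) ∧
     Transitive (Relation.TransGen
        (fun a b => prec a b ∨ (a ∈ S₁ ∧ b = z) ∨ (a = z ∧ b ∈ S₂)))) ↔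
    ∀ v ∈ S₁, ∀ w ∈ S₂, ¬(prec w v ∨ v = w) := by
  set R : α → α → Prop :=
    fun a b => prec a b ∨ (a ∈ S₁ ∧ b = z) ∨ (a = z ∧ b ∈ S₂) with hRdef
  constructor
  · rintro ⟨hi, -⟩ v hv w hw hvw
    apply hi z
    have h1 : Relation.TransGen R z w := .single (Or.inr (Or.inr ⟨rfl, hw⟩))
    have h2 : Relation.TransGen R v z := .single (Or.inr (Or.inl ⟨hv, rfl⟩))
    rcases hvw with h | rfl
    · exact (h1.tail (Or.inl h)).trans h2
    · exact h1.trans h2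
  · intro hyp
    refine ⟨?_, fun a b c hab hbc => hab.trans hbc⟩
    have hzS₁ : z ∉ S₁ := fun h => hz (hS₁ h)
    have hzS₂ : z ∉ S₂ := fun h => hz (hS₂ h)
    have hQ : ∀ a b, Relation.TransGen R a b →
        prec a b ∨ (b = z ∧ (a ∈ S₁ ∨ ∃ v ∈ S₁, prec a v)) ∨
        (a = z ∧ (b ∈ S₂ ∨ ∃ w ∈ S₂, prec w b)) ∨
        ((a ∈ S₁ ∨ ∃ v ∈ S₁, prec a v) ∧ (b ∈ S₂ ∨ ∃ w ∈ S₂, prec w b)) := by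
      intro a b h
      induction h with
      | single h =>
        rcases h with h | ⟨ha, rfl⟩ | ⟨rfl, hb⟩
        · exact Or.inl h
        · exact Or.inr (Or.inl ⟨rfl, Or.inl ha⟩)
        · exact Or.inr (Or.inr (Or.inl ⟨rfl, Or.inl hb⟩))
      | @tail b c h hstep ih =>
        -- helper: P₂ is closed under prec
        have P₂step : ∀ x y, (x ∈ S₂ ∨ ∃ w ∈ S₂, prec w x) → prec x y →
            (y ∈ S₂ ∨ ∃ w ∈ S₂, prec w y) := by
          rintro x y (hx | ⟨w, hw, hwx⟩) hxy
          · exact Or.inr ⟨x, hx, hxy⟩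
          · exact Or.inr ⟨w, hw, htrans hwx hxy⟩
        have P₂z : ¬ (z ∈ S₂ ∨ ∃ w ∈ S₂, prec w z) := by
          rintro (h | ⟨w, hw, hwz⟩)
          · exact hzS₂ h
          · exact hz (hdom w z hwz).2
        -- contradiction from P₂ b ∧ b ∈ S₁
        have bad : ∀ x, x ∈ S₁ → (x ∈ S₂ ∨ ∃ w ∈ S₂, prec w x) → False := by
          rintro x hx (h | ⟨w, hw, hwx⟩)
          · exact hyp x hx x h (Or.inr rfl)
          · exact hyp x hx w hw (Or.inl hwx)
        rcases hstep with hbc | ⟨hb, rfl⟩ | ⟨rfl, hc⟩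
        · -- prec b c
          rcases ih with h | ⟨rfl, hP₁⟩ | ⟨rfl, hP₂⟩ | ⟨hP₁, hP₂⟩
          · exact Or.inl (htrans h hbc)
          · exact absurd (hdom _ _ hbc).1 hz
          · exact Or.inr (Or.inr (Or.inl ⟨rfl, P₂step _ _ hP₂ hbc⟩))
          · exact Or.inr (Or.inr (Or.inr ⟨hP₁, P₂step _ _ hP₂ hbc⟩))
        · -- b ∈ S₁, c = z
          rcases ih with h | ⟨rfl, hP₁⟩ | ⟨rfl, hP₂⟩ | ⟨hP₁, hP₂⟩
          · exact Or.inr (Or.inl ⟨rfl, Or.inr ⟨b, hb, h⟩⟩)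
          · exact absurd hb hzS₁
          · exact absurd (bad b hb hP₂) not_false
          · exact absurd (bad b hb hP₂) not_false
        · -- b = z, c ∈ S₂
          rcases ih with h | ⟨-, hP₁⟩ | ⟨rfl, hP₂⟩ | ⟨hP₁, hP₂⟩
          · exact absurd (hdom _ _ h).2 hz
          · exact Or.inr (Or.inr (Or.inr ⟨hP₁, Or.inl hc⟩))
          · exact absurd hP₂ P₂z
          · exact absurd hP₂ P₂z
    intro a ha
    rcases hQ a a ha with h | ⟨rfl, hP₁⟩ | ⟨rfl, hP₂⟩ | ⟨hP₁, hP₂⟩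
    · exact hirr a h
    · rcases hP₁ with h | ⟨v, hv, hzv⟩
      · exact hzS₁ h
      · exact hz (hdom _ v hzv).1
    · rcases hP₂ with h | ⟨w, hw, hwz⟩
      · exact hzS₂ h
      · exact hz (hdom w _ hwz).2
    · rcases hP₁ with h1 | ⟨v, hv, hav⟩ <;> rcases hP₂ with h2 | ⟨w, hw, hwa⟩
      · exact hyp a h1 a h2 (Or.inr rfl)
      · exact hyp a h1 w hw (Or.inl hwa)
      · exact hyp v hv a h2 (Or.inl hav)
      · exact hyp v hv w hw (Or.inl (htrans hwa hav))
end

section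
/- Let (G,I,O,λ) be a labelled open graph with λ taking values in {XY,YZ}, let (c,≺) be an extended causal flow on it, and let z ∈ V∖(I∪O) satisfy λ(z)=YZ. Then c⁻¹({z}) = {z}; that is, for any u ∈ V∖O, c(u)=z implies u=z. -/
open scoped Classical
noncomputable section

inductive MLabel : Type
  | X | Y | Z | XY | XZ | YZ
  deriving DecidableEq

/-- An extended causal flow on a labelled open graph `(G, I, O, lab)`:
`c` is the correction function (its values only matter on `Oᶜ`, and must avoid inputs),
and `prec` is a strict partial order. -/
structure IsExtCausalFlow {V : Type*} (G : SimpleGraph V) (I O : Set V)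
    (lab : V → MLabel) (c : V → V) (prec : V → V → Prop) : Prop where
  irrefl : ∀ u, ¬ prec u u
  trans : ∀ ⦃a b d⦄, prec a b → prec b d → prec a d
  corr_not_input : ∀ u, u ∉ O → c u ∉ I
  c1 : ∀ u, u ∉ O → prec u (c u) ∨ u = c u
  c2 : ∀ u, u ∉ O → lab u = MLabel.XY → G.Adj u (c u)
  c3 : ∀ u, u ∉ O → lab u = MLabel.YZ → c u = u
  c4 : ∀ u, u ∉ O → ∀ v, G.Adj (c u) v → u ≠ v → prec u v

/-- The graph that results from inserting a fresh vertex (`none`) with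
neighbourhood `S` into `G`. -/
def insertGraph {V : Type*} (G : SimpleGraph V) (S : Set V) : SimpleGraph (Option V) where
  Adj a b := match a, b with
    | some x, some y => G.Adj x y
    | some x, none => x ∈ S
    | none, some y => y ∈ S
    | none, none => False
  symm := by
    refine ⟨?_⟩
    rintro (_ | x) (_ | y) h
    · exact h
    · exact h
    · exact h
    · exact G.adj_symm h
  loopless := by
    refine ⟨?_⟩
    rintro (_ | x) h
    · exact h
    · exact G.irrefl h

/-- The measurement labelling after inserting a fresh vertex measured `ℓ`. -/
def insertLab {V : Type*} (lab : V → MLabel) (ℓ : MLabel) : Option V → MLabel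
  | none => ℓ
  | some v => lab v


/-- in an extended causal flow, a YZ-measured internal vertex `z`
satisfies `c⁻¹({z}) = {z}`: no other vertex is corrected by `z`. -/
theorem yz_vertex_corrects_only_itself {V : Type*} (G : SimpleGraph V) (I O : Set V)
    (lab : V → MLabel)
    (hplanar : ∀ v, v ∉ O → lab v = MLabel.XY ∨ lab v = MLabel.YZ)
    (c : V → V) (prec : V → V → Prop)
    (hflow : IsExtCausalFlow G I O lab c prec)
    (z : V) (hzI : z ∉ I) (hzO : z ∉ O) (hlz : lab z = MLabel.YZ) :
    ∀ u, u ∉ O → c u = z → u = z := by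
  intro u huO hcu
  by_contra hne
  rcases hplanar u huO with hXY | hYZ
  · have hadj : G.Adj u z := hcu ▸ hflow.c2 u huO hXY
    have hcz : c z = z := hflow.c3 z hzO hlz
    have hzu : prec z u := hflow.c4 z hzO u (by rw [hcz]; exact hadj.symm) (fun h => hne h.symm)
    have huz : prec u z := by
      rcases hflow.c1 u huO with h | h
      · exact hcu ▸ h
      · exact absurd (h.trans hcu) hne
    exact hflow.irrefl u (hflow.trans huz hzu)
  · exact hne ((hflow.c3 u huO hYZ ▸ hcu : u = z))


end
end

section
/- Let Γ = (G,I,O,λ) be a labelled open graph with λ taking values in {XY,YZ}, let S ⊆ V with λ(s)=XY for all s ∈ S, and let Γ' be the YZ-insertion of a fresh vertex z with neighbourhood S into Γ. If (c',≺') is an extended causal flow for Γ', then the restriction of c' to V∖O together with the restriction of ≺' to V × V is an extended causal flow for Γ. -/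
open scoped Classical
noncomputable section

/-- if the YZ-insertion `Γ'` of a fresh vertex `z = none` with
neighbourhood `S` (all of whose elements are XY-measured) has an extended causal
flow `(c', prec')`, then the restrictions of `c'` and `prec'` to the original
vertices form an extended causal flow for `Γ`. -/
theorem yz_insertion_flow_restricts {V : Type*} (G : SimpleGraph V) (I O : Set V)
    (lab : V → MLabel)
    (hplanar : ∀ v, v ∉ O → lab v = MLabel.XY ∨ lab v = MLabel.YZ)
    (S : Set V) (hS : ∀ s ∈ S, lab s = MLabel.XY)
    (c' : Option V → Option V) (prec' : Option V → Option V → Prop)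
    (hflow : IsExtCausalFlow (insertGraph G S) (some '' I) (some '' O)
      (insertLab lab MLabel.YZ) c' prec') :
    (∀ u : V, (some u : Option V) ∉ (some '' O : Set (Option V)) → c' (some u) ≠ none) ∧
    IsExtCausalFlow G I O lab (fun u => (c' (some u)).getD u)
      (fun a b => prec' (some a) (some b)) := by
  have hnone_notO : (none : Option V) ∉ (some '' O) := by simp
  have hcnone : c' none = none := hflow.c3 none hnone_notO rfl
  have key : ∀ u : V, (some u : Option V) ∉ (some '' O : Set (Option V)) →
      c' (some u) ≠ none := by
    intro u hu hcon
    have hu' : u ∉ O := by simpa using hu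
    rcases hplanar u hu' with hXY | hYZ
    · have hadj := hflow.c2 (some u) hu hXY
      rw [hcon] at hadj
      have huS : u ∈ S := hadj
      have h1 : prec' (some u) none := by
        rcases hflow.c1 (some u) hu with h | h
        · rwa [hcon] at h
        · rw [hcon] at h; exact absurd h (Option.some_ne_none _)
      have h2 : prec' none (some u) :=
        hflow.c4 none hnone_notO (some u) (by rw [hcnone]; exact huS) (by simp)
      exact hflow.irrefl _ (hflow.trans h1 h2)
    · have := hflow.c3 (some u) hu hYZ
      rw [hcon] at this; exact Option.some_ne_none _ this.symm
  refine ⟨key, ?_⟩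
  have hget : ∀ u : V, u ∉ O → c' (some u) = some ((c' (some u)).getD u) := by
    intro u hu
    rcases h : c' (some u) with _ | w
    · exact absurd h (key u (by simpa using hu))
    · simp [h]
  constructor
  · intro u; exact hflow.irrefl (some u)
  · intro a b d h1 h2; exact hflow.trans h1 h2
  · intro u hu hin
    have := hflow.corr_not_input (some u) (by simpa using hu)
    rw [hget u hu] at this
    exact this ⟨_, hin, rfl⟩
  · intro u hu
    rcases hflow.c1 (some u) (by simpa using hu) with h | h
    · left; rwa [hget u hu] at h
    · right; rw [hget u hu] at h; exact Option.some_injective _ h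
  · intro u hu hXY
    have h := hflow.c2 (some u) (by simpa using hu) hXY
    rw [hget u hu] at h
    exact h
  · intro u hu hYZ
    have h := hflow.c3 (some u) (by simpa using hu) hYZ
    rw [hget u hu] at h
    exact Option.some_injective _ h
  · intro u hu v hadj hne
    have hadj' : (insertGraph G S).Adj (c' (some u)) (some v) := by
      rw [hget u hu]; exact hadj
    exact hflow.c4 (some u) (by simpa using hu) (some v) hadj' (by simpa using hne)

end
end

section
/- Let G = (V,E) be a finite simple graph, A ⊆ V, u ∈ V, and v ∈ N_G(u). Then the odd neighbourhood of A in the pivoted graph G∧uv satisfies: Odd_{G∧uv}(A) = Odd_G(A) if u,v ∉ cOdd_G(A); Odd_{G∧uv}(A) = Odd_G(A) Δ N_G[v] if u ∈ cOdd_G(A) and v ∉ cOdd_G(A); Odd_{G∧uv}(A) = Odd_G(A) Δ N_G[u] if u ∉ cOdd_G(A) and v ∈ cOdd_G(A); and Odd_{G∧uv}(A) = Odd_G(A) Δ N_G[u] Δ N_G[v] if u,v ∈ cOdd_G(A). -/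
open scoped Classical
noncomputable section

variable {V : Type*}

/-- The odd neighbourhood of a set `A`: vertices with an odd number of neighbours in `A`. -/
def oddN (G : SimpleGraph V) (A : Set V) : Set V :=
  {v | Odd ((A ∩ G.neighborSet v).ncard)}

/-- The closed odd neighbourhood of a set `A`. -/
def cOddN (G : SimpleGraph V) (A : Set V) : Set V :=
  symmDiff (oddN G A) A

/-- The closed neighbourhood `N_G[u] = N_G(u) Δ {u}`. -/
def closedNbhd (G : SimpleGraph V) (u : V) : Set V :=
  symmDiff (G.neighborSet u) {u}

/-- Local complementation about `u`: toggle all edges between distinct neighbours of `u`. -/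
def localComp (G : SimpleGraph V) (u : V) : SimpleGraph V where
  Adj a b := (G.Adj a b ∧ ¬(G.Adj u a ∧ G.Adj u b)) ∨
             (¬G.Adj a b ∧ a ≠ b ∧ G.Adj u a ∧ G.Adj u b)
  symm := by
    constructor
    rintro a b (⟨hab, hn⟩ | ⟨hn, hne, ha, hb⟩)
    · exact Or.inl ⟨hab.symm, fun h => hn ⟨h.2, h.1⟩⟩
    · exact Or.inr ⟨fun h => hn h.symm, hne.symm, hb, ha⟩
  loopless := by
    constructor
    rintro a (⟨hab, _⟩ | ⟨_, hne, _, _⟩)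
    · exact G.loopless.irrefl a hab
    · exact hne rfl

/-- The pivot about the edge `{u,v}`: `G ∧ uv = G ⋆ u ⋆ v ⋆ u`. -/
def pivotG (G : SimpleGraph V) (u v : V) : SimpleGraph V :=
  localComp (localComp (localComp G u) v) u


def ind (G : SimpleGraph V) (x a : V) : ZMod 2 := if G.Adj x a then 1 else 0

def chi (A : Set V) (x : V) : ZMod 2 := if x ∈ A then 1 else 0

def Ssum [Fintype V] (G : SimpleGraph V) (A : Set V) (x : V) : ZMod 2 :=
  ∑ a, chi A a * ind G x a

lemma odd_iff_zmod (n : ℕ) : Odd n ↔ (n : ZMod 2) = 1 := by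
  rw [Nat.odd_iff, ← ZMod.natCast_mod n 2]
  rcases Nat.mod_two_eq_zero_or_one n with h | h <;> rw [h] <;> simp

lemma mem_oddN_iff [Fintype V] (G : SimpleGraph V) (A : Set V) (x : V) :
    x ∈ oddN G A ↔ Ssum G A x = 1 := by
  have h1 : Ssum G A x
      = ((Finset.univ.filter (fun a => a ∈ A ∧ G.Adj x a)).card : ZMod 2) := by
    rw [Ssum, ← Finset.sum_boole]
    refine Finset.sum_congr rfl fun a _ => ?_
    by_cases ha : a ∈ A <;> by_cases hb : G.Adj x a <;> simp [chi, ind, ha, hb]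
  have h2 : (A ∩ G.neighborSet x).ncard
      = (Finset.univ.filter (fun a => a ∈ A ∧ G.Adj x a)).card := by
    rw [Set.ncard_eq_toFinset_card']
    congr 1
    ext a
    simp [SimpleGraph.mem_neighborSet]
  show Odd ((A ∩ G.neighborSet x).ncard) ↔ _
  rw [odd_iff_zmod, h1, h2]

lemma mem_cOddN_iff [Fintype V] (G : SimpleGraph V) (A : Set V) (x : V) :
    x ∈ cOddN G A ↔ Ssum G A x + chi A x = 1 := by
  rw [cOddN, Set.mem_symmDiff, mem_oddN_iff]
  generalize Ssum G A x = s
  by_cases hA : x ∈ A <;> simp [chi, hA] <;> revert s <;> decide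

lemma mem_closedNbhd_iff (G : SimpleGraph V) (v x : V) :
    x ∈ closedNbhd G v ↔ ind G v x + (if x = v then 1 else 0) = 1 := by
  rw [closedNbhd, Set.mem_symmDiff]
  simp only [SimpleGraph.mem_neighborSet, Set.mem_singleton_iff]
  by_cases h1 : G.Adj v x <;> by_cases h2 : x = v <;> simp [ind, h1, h2] <;> decide

lemma localComp_adj (G : SimpleGraph V) (u a b : V) :
    (localComp G u).Adj a b ↔
      (G.Adj a b ∧ ¬(G.Adj u a ∧ G.Adj u b)) ∨
      (¬G.Adj a b ∧ a ≠ b ∧ G.Adj u a ∧ G.Adj u b) := Iff.rfl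

lemma ind_localComp (G : SimpleGraph V) (u x a : V) :
    ind (localComp G u) x a
      = ind G x a + (if x = a then 0 else 1) * (ind G u x * ind G u a) := by
  by_cases h1 : G.Adj x a <;> by_cases h2 : x = a <;>
    by_cases h3 : G.Adj u x <;> by_cases h4 : G.Adj u a <;>
      simp [ind, localComp_adj, h1, h2, h3, h4] <;> decide

lemma Ssum_localComp [Fintype V] (G : SimpleGraph V) (A : Set V) (u x : V) :
    Ssum (localComp G u) A x
      = Ssum G A x + ind G u x * (Ssum G A u + chi A x * ind G u x) := by
  have hd : ∀ a : V, (if x = a then (0 : ZMod 2) else 1)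
      = 1 + (if x = a then 1 else 0) := by
    intro a; by_cases h : x = a <;> simp [h] <;> decide
  have key : ∀ a ∈ Finset.univ, chi A a * ind (localComp G u) x a
      = chi A a * ind G x a + ind G u x * (chi A a * ind G u a)
        + ind G u x * ((if x = a then chi A a * ind G u a else 0)) := by
    intro a _
    rw [ind_localComp, hd a]
    by_cases h : x = a <;> simp [h] <;> ring
  rw [Ssum, Finset.sum_congr rfl key, Finset.sum_add_distrib, Finset.sum_add_distrib,
    ← Finset.mul_sum, ← Finset.mul_sum, Finset.sum_ite_eq, if_pos (Finset.mem_univ x)]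
  show _ = Ssum G A x + _
  rw [Ssum, Ssum]
  ring

set_option synthInstance.maxSize 5000
set_option maxHeartbeats 1000000

/-- the odd neighbourhood of a set `A` after pivoting about an
edge `{u,v}`, in terms of the original odd neighbourhood and the closed
neighbourhoods of `u` and `v`. -/
theorem oddN_pivot {V : Type*} [Fintype V] (G : SimpleGraph V) (A : Set V)
    (u v : V) (hv : v ∈ G.neighborSet u) :
    (u ∉ cOddN G A → v ∉ cOddN G A →
      oddN (pivotG G u v) A = oddN G A) ∧
    (u ∈ cOddN G A → v ∉ cOddN G A →
      oddN (pivotG G u v) A = symmDiff (oddN G A) (closedNbhd G v)) ∧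
    (u ∉ cOddN G A → v ∈ cOddN G A →
      oddN (pivotG G u v) A = symmDiff (oddN G A) (closedNbhd G u)) ∧
    (u ∈ cOddN G A → v ∈ cOddN G A →
      oddN (pivotG G u v) A =
        symmDiff (symmDiff (oddN G A) (closedNbhd G u)) (closedNbhd G v)) := by
  have huv : G.Adj u v := hv
  have hne : u ≠ v := huv.ne
  have hne' : v ≠ u := hne.symm
  have hPuv : ind G u v = 1 := if_pos huv
  have hPvu : ind G v u = 1 := if_pos huv.symm
  have hPuu : ind G u u = 0 := if_neg (G.loopless.irrefl u)
  have hPvv : ind G v v = 0 := if_neg (G.loopless.irrefl v)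
  refine ⟨?_, ?_, ?_, ?_⟩ <;> intro h1 h2 <;> ext x <;>
    rw [mem_cOddN_iff] at h1 h2 <;>
    simp only [pivotG, Set.mem_symmDiff, mem_oddN_iff, mem_closedNbhd_iff,
      Ssum_localComp, ind_localComp] <;>
    by_cases hxu : x = u
  all_goals by_cases hxv : x = v
  all_goals try (exact absurd (hxu.symm.trans hxv) hne)
  all_goals try subst hxu
  all_goals try subst hxv
  all_goals try (have hxu' : u ≠ x := Ne.symm hxu)
  all_goals try (have hxv' : v ≠ x := Ne.symm hxv)
  all_goals simp only [hPuv, hPvu, hPuu, hPvv, if_pos rfl, hne, hne', if_neg hne,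
    if_neg hne']
  all_goals try simp only [if_neg hxu, if_neg hxv, if_neg hxu', if_neg hxv']
  all_goals try simp only [if_neg hxu']
  all_goals try simp only [if_neg hxv']
  all_goals (
    revert h1 h2
    try generalize Ssum G A x = sx
    try generalize Ssum G A u = su
    try generalize Ssum G A v = sv
    try generalize chi A x = cx
    try generalize chi A u = cu
    try generalize chi A v = cv
    try generalize ind G u x = px
    try generalize ind G v x = qx
    try revert qx
    try revert px
    try revert cv
    try revert cu
    try revert cx
    try revert sv
    try revert su
    try revert sx
    decide)

end
end
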